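/- arXiv:2108.02470 — 2 statements merged into one kernel-verified Lean document; each statement's English description precedes it below -/
import Mathlib

section
/- Let V be a finite-dimensional vector space over a finite field F_r with dim V ≥ 2, and let G ≤ GL(V) have a regular orbit on V. Consider the affine group GV = V ⋊ G acting on V. Then the Saxl graph Σ(GV) has the property that every two vertices have a common neighbour if and only if every vector in V can be written as the sum of two vectors each belonging to a regular orbit of G on V. -/
open MulAction

def IsBase (G : Type*) {Ω : Type*} [Group G] [MulAction G Ω] (B : Set Ω) : Prop :=
  ∀ g : G, (∀ b ∈ B, g • b = b) → g = 1

noncomputable def baseSize (G Ω : Type*) [Group G] [MulAction G Ω] : ℕ :=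
  sInf {n : ℕ | ∃ B : Finset Ω, B.card = n ∧ IsBase G (B : Set Ω)}

def saxlGraph (G Ω : Type*) [Group G] [MulAction G Ω] : SimpleGraph Ω where
  Adj x y := x ≠ y ∧ stabilizer G x ⊓ stabilizer G y = ⊥
  symm := ⟨fun x y h => ⟨h.1.symm, by rw [inf_comm]; exact h.2⟩⟩
  loopless := ⟨fun x h => h.1 rfl⟩

/-- The affine group `GV = V ⋊ G`, realised as the subgroup of `Equiv.Perm V`
consisting of the maps `v ↦ g v + w` with `g ∈ G` and `w ∈ V`. -/
def affineGroup {F V : Type*} [Field F] [AddCommGroup V] [Module F V]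
    (G : Subgroup (V ≃ₗ[F] V)) : Subgroup (Equiv.Perm V) where
  carrier := {e | ∃ g ∈ G, ∃ w : V, ∀ v : V, e v = g v + w}
  one_mem' := ⟨1, one_mem G, 0, fun v => by simp⟩
  mul_mem' := by
    rintro a b ⟨g, hg, w, hw⟩ ⟨g', hg', w', hw'⟩
    refine ⟨g * g', mul_mem hg hg', g w' + w, fun v => ?_⟩
    show a (b v) = _
    rw [hw' v, hw (g' v + w')]
    simp only [map_add]
    show g (g' v) + g w' + w = g (g' v) + (g w' + w)
    rw [add_assoc]
  inv_mem' := by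
    rintro a ⟨g, hg, w, hw⟩
    refine ⟨g⁻¹, inv_mem hg, -(g⁻¹ w), fun v => ?_⟩
    show a.symm v = _
    rw [Equiv.symm_apply_eq, hw]
    show v = g ((g⁻¹ : V ≃ₗ[F] V) v + -(g⁻¹ : V ≃ₗ[F] V) w) + w
    simp only [map_add, map_neg]
    show v = g (g.symm v) + -(g (g.symm w)) + w
    simp

/-- The affine map `v ↦ g v + w` as a permutation of `V`. -/
def affMap {F V : Type*} [Field F] [AddCommGroup V] [Module F V]
    (g : V ≃ₗ[F] V) (w : V) : Equiv.Perm V :=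
  g.toEquiv.trans (Equiv.addRight w)

lemma affMap_apply {F V : Type*} [Field F] [AddCommGroup V] [Module F V]
    (g : V ≃ₗ[F] V) (w : V) (v : V) : affMap g w v = g v + w := rfl

lemma affMap_mem {F V : Type*} [Field F] [AddCommGroup V] [Module F V]
    {G : Subgroup (V ≃ₗ[F] V)} {g : V ≃ₗ[F] V} (hg : g ∈ G) (w : V) :
    affMap g w ∈ affineGroup G :=
  ⟨g, hg, w, fun _ => rfl⟩

lemma saxl_adj_iff {F V : Type*} [Field F] [AddCommGroup V] [Module F V]
    (G : Subgroup (V ≃ₗ[F] V)) (x z : V) :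
    (saxlGraph (↥(affineGroup G)) V).Adj x z ↔
      x ≠ z ∧ ∀ g ∈ G, g (x - z) = x - z → g = 1 := by
  constructor
  · rintro ⟨hne, hbot⟩
    refine ⟨hne, fun g hg hfix => ?_⟩
    set w : V := x - g x with hw
    have hmemx : (⟨affMap g w, affMap_mem hg w⟩ : ↥(affineGroup G)) ∈ stabilizer (↥(affineGroup G)) x := by
      rw [mem_stabilizer_iff]
      show affMap g w x = x
      rw [affMap_apply, hw]
      abel
    have hgx : g x - g z = x - z := by rw [← map_sub, hfix]
    have hmemz : (⟨affMap g w, affMap_mem hg w⟩ : ↥(affineGroup G)) ∈ stabilizer (↥(affineGroup G)) z := by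
      rw [mem_stabilizer_iff]
      show affMap g w z = z
      rw [affMap_apply, hw]
      have hx : g x = (x - z) + g z := by rw [sub_eq_iff_eq_add] at hgx; exact hgx
      rw [hx]; abel
    have h1 : (⟨affMap g w, affMap_mem hg w⟩ : ↥(affineGroup G)) = 1 := by
      have : (⟨affMap g w, affMap_mem hg w⟩ : ↥(affineGroup G)) ∈
          stabilizer (↥(affineGroup G)) x ⊓ stabilizer (↥(affineGroup G)) z :=
        ⟨hmemx, hmemz⟩
      rw [hbot, Subgroup.mem_bot] at this
      exact this
    have hall : ∀ v : V, g v + w = v := by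
      intro v
      have := congrArg (fun e : ↥(affineGroup G) => (e : Equiv.Perm V) v) h1
      simpa [affMap_apply] using this
    have hw0 : w = 0 := by
      have := hall 0
      rwa [map_zero, zero_add] at this
    ext v
    have := hall v
    rw [hw0, add_zero] at this
    simpa using this
  · rintro ⟨hne, hreg'⟩
    refine ⟨hne, ?_⟩
    rw [Subgroup.eq_bot_iff_forall]
    rintro e ⟨hex, hez⟩
    obtain ⟨g, hg, w, hw⟩ := e.2
    have hex' : (e : Equiv.Perm V) x = x := hex
    have hez' : (e : Equiv.Perm V) z = z := hez
    have hx : g x + w = x := by rw [← hw]; exact hex'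
    have hz : g z + w = z := by rw [← hw]; exact hez'
    have hfix : g (x - z) = x - z := by
      rw [map_sub]
      have : (g x + w) - (g z + w) = x - z := by rw [hx, hz]
      simpa using this
    have hg1 : g = 1 := hreg' g hg hfix
    have hw0 : w = 0 := by
      rw [hg1] at hx
      simpa using hx
    ext v
    show (e : Equiv.Perm V) v = v
    rw [hw, hg1, hw0]
    simp

theorem stmt_6 {F V : Type*} [Field F] [Fintype F] [AddCommGroup V] [Module F V]
    [FiniteDimensional F V] [Fintype V] (hd : 2 ≤ Module.finrank F V)
    (G : Subgroup (V ≃ₗ[F] V))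
    (hreg : ∃ v : V, ∀ g ∈ G, g v = v → g = 1) :
    ((∀ x y : V, ∃ z : V, (saxlGraph (↥(affineGroup G)) V).Adj x z ∧
        (saxlGraph (↥(affineGroup G)) V).Adj y z) ↔
      ∀ v : V, ∃ v₁ v₂ : V, (∀ g ∈ G, g v₁ = v₁ → g = 1) ∧
        (∀ g ∈ G, g v₂ = v₂ → g = 1) ∧ v = v₁ + v₂) := by
  constructor
  · intro hL v
    obtain ⟨z, h1, h2⟩ := hL v 0
    rw [saxl_adj_iff] at h1 h2
    refine ⟨v - z, z, h1.2, fun g hg hz => h2.2 g hg (by rw [zero_sub, map_neg, hz]), by abel⟩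
  · intro hR x y
    classical
    by_cases htriv : ∀ g ∈ G, g = 1
    · -- G is trivial; just need z ≠ x, z ≠ y
      have hcard : 2 < Fintype.card V := by
        have h1 : Fintype.card V = Fintype.card F ^ Module.finrank F V :=
          Module.card_eq_pow_finrank
        have h2 : 2 ≤ Fintype.card F := Fintype.one_lt_card
        calc 2 < 2 ^ 2 := by norm_num
          _ ≤ Fintype.card F ^ 2 := Nat.pow_le_pow_left h2 2
          _ ≤ Fintype.card F ^ Module.finrank F V :=
              Nat.pow_le_pow_right (by omega) hd
          _ = Fintype.card V := h1.symm
      obtain ⟨z, hzx, hzy⟩ : ∃ z : V, z ≠ x ∧ z ≠ y := by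
        by_contra h
        push_neg at h
        have hsub : (Finset.univ : Finset V) ⊆ {x, y} := by
          intro z _
          rcases em (z = x) with hz | hz
          · simp [hz]
          · simp [h z hz]
        have := Finset.card_le_card hsub
        simp only [Finset.card_univ] at this
        have h2 : ({x, y} : Finset V).card ≤ 2 := Finset.card_insert_le _ _ |>.trans (by simp)
        omega
      exact ⟨z, (saxl_adj_iff G x z).mpr ⟨fun h => hzx h.symm, fun g hg _ => htriv g hg⟩,
        (saxl_adj_iff G y z).mpr ⟨fun h => hzy h.symm, fun g hg _ => htriv g hg⟩⟩
    · push_neg at htriv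
      obtain ⟨g₀, hg₀, hg₀ne⟩ := htriv
      obtain ⟨v₁, v₂, h1, h2, hsum⟩ := hR (x - y)
      have hv₁ : v₁ ≠ 0 := fun h => hg₀ne (h1 g₀ hg₀ (by rw [h, map_zero]))
      have hv₂ : v₂ ≠ 0 := fun h => hg₀ne (h2 g₀ hg₀ (by rw [h, map_zero]))
      have hxs : x = v₁ + v₂ + y := by rw [sub_eq_iff_eq_add] at hsum; exact hsum
      refine ⟨x - v₁, ?_, ?_⟩
      · rw [saxl_adj_iff]
        constructor
        · intro h
          apply hv₁
          have := sub_eq_zero.mpr h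
          simpa using this
        · intro g hg hfix
          apply h1 g hg
          have : x - (x - v₁) = v₁ := by abel
          rwa [this] at hfix
      · rw [saxl_adj_iff]
        have hyz : y - (x - v₁) = -v₂ := by rw [hxs]; abel
        constructor
        · intro h
          apply hv₂
          have := sub_eq_zero.mpr h
          rw [hyz] at this
          simpa using this
        · intro g hg hfix
          rw [hyz, map_neg, neg_inj] at hfix
          exact h2 g hg hfix
end

section
/- Karamata's inequality: Let f : ℝ → ℝ be convex, and let (x₁,...,x_n) and (y₁,...,y_n) be weakly decreasing real sequences such that (x₁,...,x_n) majorizes (y₁,...,y_n), i.e., x₁ + ... + x_i ≥ y₁ + ... + y_i for all i < n and x₁ + ... + x_n = y₁ + ... + y_n. Then f(x₁) + ... + f(x_n) ≥ f(y₁) + ... + f(y_n). -/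
open Finset

private lemma abel_nonneg (n : ℕ) (c d : ℕ → ℝ)
    (hc : ∀ i, i + 1 < n → c (i + 1) ≤ c i)
    (hD : ∀ k, k < n → 0 ≤ ∑ i ∈ range k, d i)
    (hDn : ∑ i ∈ range n, d i = 0) :
    0 ≤ ∑ i ∈ range n, c i * d i := by
  rcases Nat.eq_zero_or_pos n with rfl | hn
  · simp
  have key : ∀ k, 1 ≤ k → k ≤ n → c (k - 1) * ∑ i ∈ range k, d i ≤ ∑ i ∈ range k, c i * d i := by
    intro k hk1 hkn
    induction k with
    | zero => omega
    | succ k ih =>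
      rcases Nat.eq_zero_or_pos k with rfl | hk
      · simp
      have hkn' : k ≤ n := le_of_lt (Nat.lt_of_lt_of_le (Nat.lt_succ_self k) hkn)
      have ih' := ih hk hkn'
      have hck : c k ≤ c (k - 1) := by
        have := hc (k - 1) (by omega)
        have hk' : k - 1 + 1 = k := by omega
        rwa [hk'] at this
      have hDk : 0 ≤ ∑ i ∈ range k, d i := hD k (by omega)
      rw [Finset.sum_range_succ, Finset.sum_range_succ]
      have : c (k + 1 - 1) * (∑ i ∈ range k, d i + d k)
          = c k * ∑ i ∈ range k, d i + c k * d k := by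
        simp [Nat.add_sub_cancel]; ring
      rw [this]
      have h1 : c k * ∑ i ∈ range k, d i ≤ c (k - 1) * ∑ i ∈ range k, d i :=
        mul_le_mul_of_nonneg_right hck hDk
      linarith
  have := key n hn le_rfl
  rw [hDn] at this
  simpa using this

/-- Karamata's inequality: if `f` is convex and the weakly decreasing sequence `x`
majorizes the weakly decreasing sequence `y`, then `∑ f(x i) ≥ ∑ f(y i)`. -/
theorem stmt_9 (f : ℝ → ℝ) (hf : ConvexOn ℝ Set.univ f) (n : ℕ) (x y : ℕ → ℝ)
    (hx : ∀ i, i + 1 < n → x (i + 1) ≤ x i) (hy : ∀ i, i + 1 < n → y (i + 1) ≤ y i)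
    (hmaj : ∀ k, k < n → ∑ i ∈ Finset.range k, y i ≤ ∑ i ∈ Finset.range k, x i)
    (hsum : ∑ i ∈ Finset.range n, x i = ∑ i ∈ Finset.range n, y i) :
    ∑ i ∈ Finset.range n, f (y i) ≤ ∑ i ∈ Finset.range n, f (x i) := by
  classical
  set sl : ℝ → ℝ → ℝ := fun a b => (f b - f a) / (b - a) with hsl
  -- slope symmetric
  have sl_comm : ∀ a b, sl a b = sl b a := by
    intro a b
    rcases eq_or_ne a b with rfl | h
    · rfl
    · simp only [hsl]
      rw [← neg_div_neg_eq]; ring_nf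
  -- monotonicity in both endpoints
  have sl_mono : ∀ a b a' b' : ℝ, a < b → a' < b' → a ≤ a' → b ≤ b' → sl a b ≤ sl a' b' := by
    intro a b a' b' hab hab' ha hb
    have h1 : sl a b ≤ sl a b' := by
      have hd : b' ≠ a := by intro h; rw [h] at hab'; linarith
      exact hf.secant_mono (Set.mem_univ a) (Set.mem_univ b) (Set.mem_univ b') hab.ne' hd hb
    have h2 : sl a b' ≤ sl a' b' := by
      rw [sl_comm a b', sl_comm a' b']
      have haa : a ≠ b' := by intro h; rw [h] at ha; linarith
      exact hf.secant_mono (Set.mem_univ b') (Set.mem_univ a) (Set.mem_univ a')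
        haa hab'.ne ha
    linarith
  -- left derivative
  set lder : ℝ → ℝ := fun p => sSup ((fun z => sl z p) '' Set.Iio p) with hlder
  have lder_bdd : ∀ p : ℝ, BddAbove ((fun z => sl z p) '' Set.Iio p) := by
    intro p
    refine ⟨sl p (p + 1), ?_⟩
    rintro _ ⟨z, hz, rfl⟩
    exact sl_mono z p p (p + 1) hz (by linarith) hz.le (by linarith)
  have lder_ne : ∀ p : ℝ, ((fun z => sl z p) '' Set.Iio p).Nonempty :=
    fun p => ⟨sl (p - 1) p, ⟨p - 1, by simp, rfl⟩⟩
  have le_lder : ∀ p z : ℝ, z < p → sl z p ≤ lder p := by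
    intro p z hz
    exact le_csSup (lder_bdd p) ⟨z, hz, rfl⟩
  have lder_le : ∀ p M : ℝ, (∀ z, z < p → sl z p ≤ M) → lder p ≤ M := by
    intro p M hM
    exact csSup_le (lder_ne p) (by rintro _ ⟨z, hz, rfl⟩; exact hM z hz)
  have lder_mono : ∀ p p' : ℝ, p' ≤ p → lder p' ≤ lder p := by
    intro p p' hpp
    rcases eq_or_lt_of_le hpp with rfl | h
    · exact le_rfl
    · exact lder_le p' (lder p) fun z hz =>
        le_trans (sl_mono z p' z p hz (hz.trans h) le_rfl hpp) (le_lder p z (hz.trans h))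
  -- the coefficients
  set c : ℕ → ℝ := fun i => if x i = y i then lder (x i) else sl (x i) (y i) with hc_def
  have sl_minmax : ∀ a b : ℝ, a ≠ b → sl a b = sl (min a b) (max a b) := by
    intro a b hab
    rcases le_total a b with h | h
    · rw [min_eq_left h, max_eq_right h]
    · rw [min_eq_right h, max_eq_left h, sl_comm]
  have hc : ∀ i, i + 1 < n → c (i + 1) ≤ c i := by
    intro i hi
    have ha : x (i + 1) ≤ x i := hx i hi
    have hb : y (i + 1) ≤ y i := hy i hi
    simp only [hc_def]
    by_cases h1 : x i = y i
    · by_cases h2 : x (i + 1) = y (i + 1)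
      · rw [if_pos h1, if_pos h2]
        exact lder_mono _ _ ha
      · rw [if_pos h1, if_neg h2]
        set m := min (x (i + 1)) (y (i + 1))
        set M := max (x (i + 1)) (y (i + 1))
        have hmM : m < M := min_lt_max.mpr h2
        have hMp : M ≤ x i := max_le ha (hb.trans (le_of_eq h1.symm))
        rw [sl_minmax _ _ h2]
        calc sl m M ≤ sl m (x i) := sl_mono m M m (x i) hmM (lt_of_lt_of_le hmM hMp) le_rfl hMp
          _ ≤ lder (x i) := le_lder _ _ (lt_of_lt_of_le hmM hMp)
    · by_cases h2 : x (i + 1) = y (i + 1)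
      · rw [if_neg h1, if_pos h2]
        set m := min (x i) (y i)
        set M := max (x i) (y i)
        have hmM : m < M := min_lt_max.mpr h1
        have hpm : x (i + 1) ≤ m := le_min ha ((le_of_eq h2).trans hb)
        rw [sl_minmax _ _ h1]
        exact lder_le _ _ fun z hz =>
          sl_mono z (x (i + 1)) m M hz hmM (le_trans hz.le hpm) (le_trans hpm hmM.le)
      · rw [if_neg h1, if_neg h2]
        rw [sl_minmax _ _ h2, sl_minmax _ _ h1]
        exact sl_mono _ _ _ _ (min_lt_max.mpr h2) (min_lt_max.mpr h1)
          (min_le_min ha hb) (max_le_max ha hb)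
  -- pointwise identity
  have hpt : ∀ i, c i * (x i - y i) = f (x i) - f (y i) := by
    intro i
    simp only [hc_def]
    by_cases h : x i = y i
    · simp [h]
    · simp only [h, if_false, hsl]
      have : y i - x i ≠ 0 := sub_ne_zero.mpr (Ne.symm h)
      field_simp
      ring
  have habel := abel_nonneg n c (fun i => x i - y i) hc
    (fun k hk => by
      have := hmaj k hk
      rw [Finset.sum_sub_distrib]
      linarith)
    (by rw [Finset.sum_sub_distrib]; linarith)
  have : ∑ i ∈ range n, c i * (x i - y i) = ∑ i ∈ range n, (f (x i) - f (y i)) :=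
    Finset.sum_congr rfl fun i _ => hpt i
  rw [this, Finset.sum_sub_distrib] at habel
  linarith
end
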